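/- Let a, b, c be positive integers such that a² > c > 1, a divides c − 1, b^(c−1) ≡ 1 (mod c), and for every prime p dividing a one has gcd(b^((c−1)/p) − 1, c) = 1. Then every prime q dividing c satisfies q > a. -/

import Mathlib

/-!
Fix a prime `q ∣ c`. Modulo `q`, the order `d` of `b` divides `c - 1`, and no prime `p ∣ a` can
divide the cofactor `(c - 1) / d`, since otherwise `b ^ ((c - 1) / p) ≡ 1 [MOD q]`, making `q` a
common divisor of `b ^ ((c - 1) / p) - 1` and `c`. Hence `a ∣ d ∣ q - 1`, so `a < q`.
-/

theorem dvd_orderOf_of_pow_div_prime_ne_one {G : Type*} [Monoid G] {x : G} {n a : ℕ}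
    (hx : x ^ n = 1) (han : a ∣ n) (h : ∀ p : ℕ, p.Prime → p ∣ a → x ^ (n / p) ≠ 1) :
    a ∣ orderOf x := by
  obtain ⟨k, hn⟩ := orderOf_dvd_of_pow_eq_one hx
  have hcop : a.Coprime k := Nat.coprime_of_dvd fun p hp hpa ⟨j, hk⟩ ↦ h p hp hpa <| by
    rw [hn, hk, ← mul_assoc, mul_comm _ p, mul_assoc, Nat.mul_div_cancel_left _ hp.pos, pow_mul,
      pow_orderOf_eq_one, one_pow]
  exact hcop.dvd_of_dvd_mul_right (hn ▸ han)

theorem ZMod.natCast_ne_one_of_gcd_sub_one_eq_one {q m c : ℕ} (hq : q ≠ 1) (hqc : q ∣ c)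
    (h : Nat.gcd (m - 1) c = 1) : (m : ZMod q) ≠ 1 := by
  intro hm
  have hdvd : q ∣ m - 1 := Nat.dvd_of_mod_eq_zero <| Nat.sub_mod_eq_zero_of_mod_eq <| by
    simpa using (ZMod.natCast_eq_natCast_iff' m 1 q).1 (by simpa using hm)
  exact hq (Nat.dvd_one.1 (h ▸ Nat.dvd_gcd hdvd hqc))

theorem pocklington_prime_divisor_bound_general (a b c : ℕ)
    (h2 : 1 < c) (h3 : a ∣ c - 1)
    (h4 : b ^ (c - 1) ≡ 1 [MOD c])
    (h5 : ∀ p : ℕ, p.Prime → p ∣ a → Nat.gcd (b ^ ((c - 1) / p) - 1) c = 1) :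
    ∀ q : ℕ, q.Prime → q ∣ c → a < q := by
  intro q hq hqc
  have := Fact.mk hq
  have hpow : (b : ZMod q) ^ (c - 1) = 1 := by
    exact_mod_cast (ZMod.natCast_eq_natCast_iff _ _ _).2 (h4.of_dvd hqc)
  have hb0 : (b : ZMod q) ≠ 0 := by
    intro h0
    rw [h0, zero_pow (by omega)] at hpow
    exact zero_ne_one hpow
  have had : a ∣ orderOf (b : ZMod q) :=
    dvd_orderOf_of_pow_div_prime_ne_one hpow h3 fun p hp hpa ↦ by
      exact_mod_cast ZMod.natCast_ne_one_of_gcd_sub_one_eq_one hq.ne_one hqc (h5 p hp hpa)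
  exact Nat.lt_of_le_sub_one hq.pos <|
    Nat.le_of_dvd (Nat.sub_pos_of_lt hq.one_lt) (had.trans (ZMod.orderOf_dvd_card_sub_one hb0))

theorem pocklington_prime_divisor_bound (a b c : ℕ) (ha : 0 < a) (hb : 0 < b) (hc : 0 < c)
    (h1 : c < a ^ 2) (h2 : 1 < c) (h3 : a ∣ c - 1)
    (h4 : b ^ (c - 1) ≡ 1 [MOD c])
    (h5 : ∀ p : ℕ, p.Prime → p ∣ a → Nat.gcd (b ^ ((c - 1) / p) - 1) c = 1) :
    ∀ q : ℕ, q.Prime → q ∣ c → a < q :=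
  pocklington_prime_divisor_bound_general a b c h2 h3 h4 h5
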